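/- arXiv:2012.06818 — 4 statements merged into one kernel-verified Lean document; each statement's English description precedes it below -/
import Mathlib

section
/- Let (r,v) : I → H² × dS² be a spacelike Legendre curve with spacelike hyperbolic Legendre curvature (ℓ,m), and let Q ∈ H² lie on the same branch of H² as r (say Q ∈ H²₊ and r(I) ⊂ H²₊). Then the derivative of the pedal curve satisfies d/ds Ped_Q(r)(s) = −(m(s)/√(1+⟨Q,v(s)⟩²))·(⟨Q,μ(s)⟩v(s) + ⟨Q,v(s)⟩μ(s)) − m(s)·(⟨Q,v(s)⟩⟨Q,μ(s)⟩/(1+⟨Q,v(s)⟩²)^{3/2})·(−⟨Q,r(s)⟩r(s) + ⟨Q,μ(s)⟩μ(s)), and consequently Ped_Q(r) has a singular point at s₀ ∈ I (i.e., d/ds Ped_Q(r)(s₀) = 0) if and only if m(s₀) = 0 or Q = r(s₀). -/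
noncomputable section

/-- The Minkowski pseudo scalar product on `ℝ³₁`. -/
def mdot (u w : Fin 3 → ℝ) : ℝ := -(u 0 * w 0) + u 1 * w 1 + u 2 * w 2

/-- The Minkowski pseudo vector product on `ℝ³₁`. -/
def mcross (u w : Fin 3 → ℝ) : Fin 3 → ℝ :=
  ![-(u 1 * w 2) + u 2 * w 1, u 2 * w 0 - u 0 * w 2, -(u 1 * w 0) + u 0 * w 1]

/-- Hyperbolic 2-space. -/
def H2 : Set (Fin 3 → ℝ) := {u | mdot u u = -1}

/-- Upper branch of hyperbolic 2-space. -/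
def H2plus : Set (Fin 3 → ℝ) := {u | mdot u u = -1 ∧ 0 < u 0}

/-- de Sitter 2-space. -/
def dS2 : Set (Fin 3 → ℝ) := {u | mdot u u = 1}

/-- A spacelike Legendre curve `(r, v)` on the open interval `I`. -/
def IsSLegendre (I : Set ℝ) (r v : ℝ → Fin 3 → ℝ) : Prop :=
  ContDiffOn ℝ (⊤ : ℕ∞) r I ∧ ContDiffOn ℝ (⊤ : ℕ∞) v I ∧
  (∀ s ∈ I, r s ∈ H2) ∧ (∀ s ∈ I, v s ∈ dS2) ∧
  (∀ s ∈ I, mdot (r s) (v s) = 0) ∧ (∀ s ∈ I, mdot (deriv r s) (v s) = 0)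

/-- `μ = r ∧ v`. -/
def muc (r v : ℝ → Fin 3 → ℝ) : ℝ → Fin 3 → ℝ := fun s => mcross (r s) (v s)

/-- First Legendre curvature `ℓ = ⟨r', μ⟩`. -/
def ellc (r v : ℝ → Fin 3 → ℝ) : ℝ → ℝ := fun s => mdot (deriv r s) (muc r v s)

/-- Second Legendre curvature `m = ⟨v', μ⟩`. -/
def mc (r v : ℝ → Fin 3 → ℝ) : ℝ → ℝ := fun s => mdot (deriv v s) (muc r v s)

/-- Hyperbolic pedal curve relative to `Q` of a frontal with dual curve `v`. -/
def Ped (Q : Fin 3 → ℝ) (v : ℝ → Fin 3 → ℝ) (s : ℝ) : Fin 3 → ℝ :=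
  (Real.sqrt (1 + (mdot Q (v s)) ^ 2))⁻¹ • (Q - mdot Q (v s) • v s)

/-- Hyperbolic orthotomic curve relative to `Q` of a frontal with dual curve `v`. -/
def Ort (Q : Fin 3 → ℝ) (v : ℝ → Fin 3 → ℝ) (s : ℝ) : Fin 3 → ℝ :=
  Q - (2 * mdot Q (v s)) • v s

/-- The standard global chart of `H²₊`. -/
def qchart (x : Fin 3 → ℝ) : ℝ × ℝ := (x 1, x 2)

/-- `f` has an `A_{k-1}`-type singularity at `s₀` (for `k = 0` this means `f s₀ ≠ 0`,
i.e. an `A_{-1}`-type singularity). -/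
def AkSingPred (f : ℝ → ℝ) (k : ℕ) (s₀ : ℝ) : Prop :=
  (∀ i < k, iteratedDeriv i f s₀ = 0) ∧ iteratedDeriv k f s₀ ≠ 0

/-- `ψ` is a germ of a `C^n` diffeomorphism at `x`. -/
def IsLocalCnDiffeoAt (n : ℕ∞) {E F : Type*} [NormedAddCommGroup E] [NormedSpace ℝ E]
    [NormedAddCommGroup F] [NormedSpace ℝ F] (ψ : E → F) (x : E) : Prop :=
  ∃ (U : Set E) (V : Set F) (ψinv : F → E), IsOpen U ∧ x ∈ U ∧ IsOpen V ∧ ψ x ∈ V ∧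
    ContDiffOn ℝ n ψ U ∧ ContDiffOn ℝ n ψinv V ∧ Set.MapsTo ψ U V ∧ Set.MapsTo ψinv V U ∧
    (∀ y ∈ U, ψinv (ψ y) = y) ∧ (∀ z ∈ V, ψ (ψinv z) = z)

/-- The plane curve germ of `f` at `s₀` is `C^n` `𝒜`-equivalent to the germ of `g` at `t₀`. -/
def CnAEquiv (n : ℕ∞) (f : ℝ → ℝ × ℝ) (s₀ : ℝ) (g : ℝ → ℝ × ℝ) (t₀ : ℝ) : Prop :=
  ∃ (φ : ℝ → ℝ) (Ψ : ℝ × ℝ → ℝ × ℝ),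
    IsLocalCnDiffeoAt n φ s₀ ∧ φ s₀ = t₀ ∧
    IsLocalCnDiffeoAt n Ψ (f s₀) ∧ Ψ (f s₀) = g t₀ ∧
    ∀ᶠ s in nhds s₀, g (φ s) = Ψ (f s)

/-- The plane curve germ of `f` at `s₀` is `C^n` `ℒ`-equivalent to the germ of `g` at `s₀`. -/
def CnLEquiv (n : ℕ∞) (f : ℝ → ℝ × ℝ) (s₀ : ℝ) (g : ℝ → ℝ × ℝ) : Prop :=
  ∃ Ψ : ℝ × ℝ → ℝ × ℝ,
    IsLocalCnDiffeoAt n Ψ (f s₀) ∧ Ψ (f s₀) = g s₀ ∧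
    ∀ᶠ s in nhds s₀, g s = Ψ (f s)

end

lemma mdot_comm (u w : Fin 3 → ℝ) : mdot u w = mdot w u := by simp [mdot]; ring
lemma mdot_self_mcross (u w : Fin 3 → ℝ) : mdot u (mcross u w) = 0 := by
  simp [mdot, mcross]; ring
lemma mdot_self_mcross' (u w : Fin 3 → ℝ) : mdot w (mcross u w) = 0 := by
  simp [mdot, mcross]; ring
lemma mdot_mcross_self (u w : Fin 3 → ℝ) :
    mdot (mcross u w) (mcross u w) = -(mdot u u * mdot w w) + (mdot u w)^2 := by
  simp [mdot, mcross]; ring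
lemma cramer (Q r v : Fin 3 → ℝ) :
    (-(mdot r r * mdot v v) + (mdot r v)^2) • Q =
      (-(mdot Q r * mdot v v) + mdot Q v * mdot r v) • r +
      (-(mdot Q v * mdot r r) + mdot Q r * mdot r v) • v +
      (mdot Q (mcross r v)) • mcross r v := by
  funext i; fin_cases i <;> simp [mdot, mcross] <;> ring
lemma mdot_add_right (u w x : Fin 3 → ℝ) : mdot u (w + x) = mdot u w + mdot u x := by
  simp [mdot]; ring
lemma mdot_sub_right (u w x : Fin 3 → ℝ) : mdot u (w - x) = mdot u w - mdot u x := by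
  simp [mdot]; ring
lemma mdot_smul_right (c : ℝ) (u w : Fin 3 → ℝ) : mdot u (c • w) = c * mdot u w := by
  simp [mdot]; ring
lemma mdot_smul_left (c : ℝ) (u w : Fin 3 → ℝ) : mdot (c • u) w = c * mdot u w := by
  simp [mdot]; ring
lemma mdot_neg_right (u w : Fin 3 → ℝ) : mdot u (-w) = -mdot u w := by simp [mdot]; ring
lemma mdot_zero_left (w : Fin 3 → ℝ) : mdot 0 w = 0 := by simp [mdot]
lemma mdot_zero_right (w : Fin 3 → ℝ) : mdot w 0 = 0 := by simp [mdot]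

lemma HasDerivAt.mdot' {f g : ℝ → Fin 3 → ℝ} {f' g' : Fin 3 → ℝ} {x : ℝ}
    (hf : HasDerivAt f f' x) (hg : HasDerivAt g g' x) :
    HasDerivAt (fun t => mdot (f t) (g t)) (mdot f' (g x) + mdot (f x) g') x := by
  have H := (((hasDerivAt_pi.mp hf 0).mul (hasDerivAt_pi.mp hg 0)).neg.add
      ((hasDerivAt_pi.mp hf 1).mul (hasDerivAt_pi.mp hg 1))).add
      ((hasDerivAt_pi.mp hf 2).mul (hasDerivAt_pi.mp hg 2))
  simp only [mdot]
  exact H.congr_deriv (by ring)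

-- Frenet: v' = m μ
lemma deriv_v_eq (I : Set ℝ) (hI : IsOpen I) (r v : ℝ → Fin 3 → ℝ)
    (h : IsSLegendre I r v) {s : ℝ} (hs : s ∈ I) :
    deriv v s = mc r v s • muc r v s := by
  obtain ⟨hr, hv, hrH, hvS, hrv, hrv'⟩ := h
  have hdr : HasDerivAt r (deriv r s) s :=
    ((hr.contDiffAt (hI.mem_nhds hs)).differentiableAt (by simp)).hasDerivAt
  have hdv : HasDerivAt v (deriv v s) s :=
    ((hv.contDiffAt (hI.mem_nhds hs)).differentiableAt (by simp)).hasDerivAt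
  set V := deriv v s with hV
  -- ⟨V, v⟩ = 0
  have hvv1 : (fun t => mdot (v t) (v t)) =ᶠ[nhds s] fun _ => (1:ℝ) :=
    Filter.eventually_of_mem (hI.mem_nhds hs) (fun t ht => hvS t ht)
  have hcv : HasDerivAt (fun t => mdot (v t) (v t)) 0 s :=
    (hasDerivAt_const s (1:ℝ)).congr_of_eventuallyEq hvv1
  have hVv : mdot V (v s) = 0 := by
    have := (hdv.mdot' hdv).unique hcv
    have hc := mdot_comm (v s) V
    linarith [this, hc]
  -- ⟨r, V⟩ = 0
  have hrv0 : (fun t => mdot (r t) (v t)) =ᶠ[nhds s] fun _ => (0:ℝ) :=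
    Filter.eventually_of_mem (hI.mem_nhds hs) (fun t ht => hrv t ht)
  have hcr : HasDerivAt (fun t => mdot (r t) (v t)) 0 s :=
    (hasDerivAt_const s (0:ℝ)).congr_of_eventuallyEq hrv0
  have hrV : mdot (r s) V = 0 := by
    have := (hdr.mdot' hdv).unique hcr
    have h2 := hrv' s hs
    linarith [this, h2]
  have hrr1 : mdot (r s) (r s) = -1 := hrH s hs
  have hvv : mdot (v s) (v s) = 1 := hvS s hs
  have hrvs : mdot (r s) (v s) = 0 := hrv s hs
  have hC := cramer V (r s) (v s)
  rw [hrr1, hvv, hrvs] at hC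
  have hVr : mdot V (r s) = 0 := by rw [mdot_comm]; exact hrV
  rw [hVr, hVv] at hC
  simpa [mc, muc] using hC

set_option maxHeartbeats 1000000 in
/-- the derivative formula for the hyperbolic pedal curve, and the
characterization of its singular points: `Ped_Q(r)` is singular at `s₀` iff
`m s₀ = 0` or `Q = r s₀`. -/
theorem pedal_deriv_formula_and_singularities
    (I : Set ℝ) (hI : IsOpen I) (r v : ℝ → Fin 3 → ℝ) (Q : Fin 3 → ℝ)
    (h : IsSLegendre I r v) (hrp : ∀ s ∈ I, r s ∈ H2plus) (hQ : Q ∈ H2plus) :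
    (∀ s ∈ I, deriv (Ped Q v) s =
      (-(mc r v s / Real.sqrt (1 + (mdot Q (v s)) ^ 2))) •
        (mdot Q (muc r v s) • v s + mdot Q (v s) • muc r v s)
      - (mc r v s * (mdot Q (v s) * mdot Q (muc r v s)) /
          (1 + (mdot Q (v s)) ^ 2) ^ (3 / 2 : ℝ)) •
        ((-(mdot Q (r s))) • r s + mdot Q (muc r v s) • muc r v s)) ∧
    (∀ s₀ ∈ I, (deriv (Ped Q v) s₀ = 0 ↔ mc r v s₀ = 0 ∨ Q = r s₀)) := by
  have hQexp : ∀ s ∈ I, Q = (-(mdot Q (r s))) • r s + mdot Q (v s) • v s +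
      mdot Q (muc r v s) • muc r v s := by
    intro s hs
    have hrr1 : mdot (r s) (r s) = -1 := h.2.2.1 s hs
    have hvv : mdot (v s) (v s) = 1 := h.2.2.2.1 s hs
    have hrvs : mdot (r s) (v s) = 0 := h.2.2.2.2.1 s hs
    have hC := cramer Q (r s) (v s)
    rw [hrr1, hvv, hrvs] at hC
    simpa [muc] using hC
  have main : ∀ s ∈ I, deriv (Ped Q v) s =
      (-(mc r v s / Real.sqrt (1 + (mdot Q (v s)) ^ 2))) •
        (mdot Q (muc r v s) • v s + mdot Q (v s) • muc r v s)
      - (mc r v s * (mdot Q (v s) * mdot Q (muc r v s)) /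
          (1 + (mdot Q (v s)) ^ 2) ^ (3 / 2 : ℝ)) •
        ((-(mdot Q (r s))) • r s + mdot Q (muc r v s) • muc r v s) := by
    intro s hs
    have hdv : HasDerivAt v (deriv v s) s :=
      ((h.2.1.contDiffAt (hI.mem_nhds hs)).differentiableAt (by simp)).hasDerivAt
    have hVm : deriv v s = mc r v s • muc r v s := deriv_v_eq I hI r v h hs
    rw [hVm] at hdv
    set m := mc r v s with hm
    set p := mdot Q (v s) with hpdef
    set qm := mdot Q (muc r v s) with hqm
    set qr := mdot Q (r s) with hqr
    -- derivative of t ↦ ⟨Q, v t⟩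
    have hp : HasDerivAt (fun t => mdot Q (v t)) (m * qm) s := by
      have := (hasDerivAt_const s Q).mdot' hdv
      simpa [mdot_zero_left, mdot_smul_right] using this
    have hs1 : (0:ℝ) < 1 + p ^ 2 := by positivity
    set a := Real.sqrt (1 + p ^ 2) with ha
    have hapos : 0 < a := Real.sqrt_pos.mpr hs1
    have haX : HasDerivAt (fun t => 1 + (mdot Q (v t)) ^ 2) (2 * p ^ 1 * (m * qm)) s :=
      (hp.pow 2).const_add 1
    have hsq : HasDerivAt (fun t => Real.sqrt (1 + (mdot Q (v t)) ^ 2))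
        ((2 * p ^ 1 * (m * qm)) / (2 * a)) s := by
      have := haX.sqrt hs1.ne'
      simpa using this
    have hinv : HasDerivAt (fun t => (Real.sqrt (1 + (mdot Q (v t)) ^ 2))⁻¹)
        (-((2 * p ^ 1 * (m * qm)) / (2 * a)) / a ^ 2) s := by
      exact (hsq.inv hapos.ne').congr_deriv (by simp only [← hpdef, ← ha])
    have hG : HasDerivAt (fun t => Q - mdot Q (v t) • v t)
        (-(p • (m • muc r v s) + (m * qm) • v s)) s := by
      have := (hp.smul hdv).const_sub Q
      simpa using this
    have hPed : HasDerivAt (Ped Q v)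
        (a⁻¹ • (-(p • (m • muc r v s) + (m * qm) • v s)) +
          (-((2 * p ^ 1 * (m * qm)) / (2 * a)) / a ^ 2) • (Q - p • v s)) s := by
      exact (hinv.smul hG).congr_deriv (by simp only [← hpdef, ← ha])
    rw [hPed.deriv]
    have hrpow : (1 + p ^ 2) ^ (3 / 2 : ℝ) = a ^ 3 := by
      rw [show (3 / 2 : ℝ) = (1 / 2) * 3 by norm_num, Real.rpow_mul hs1.le,
        ← Real.sqrt_eq_rpow, ← ha]
      rw [show (3:ℝ) = ((3:ℕ):ℝ) by norm_num, Real.rpow_natCast]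
    rw [hrpow]
    have hQv : Q - p • v s = (-(qr)) • r s + qm • muc r v s := by
      rw [hQexp s hs]; abel
    rw [hQv]
    match_scalars <;> field_simp <;> ring
  refine ⟨main, fun s₀ hs₀ => ?_⟩
  rw [main s₀ hs₀]
  have hrr1 : mdot (r s₀) (r s₀) = -1 := h.2.2.1 s₀ hs₀
  have hvv : mdot (v s₀) (v s₀) = 1 := h.2.2.2.1 s₀ hs₀
  have hrvs : mdot (r s₀) (v s₀) = 0 := h.2.2.2.2.1 s₀ hs₀
  have hmm : mdot (muc r v s₀) (muc r v s₀) = 1 := by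
    rw [muc, mdot_mcross_self, hrr1, hvv, hrvs]; ring
  have hvm : mdot (v s₀) (muc r v s₀) = 0 := mdot_self_mcross' _ _
  have hrm : mdot (r s₀) (muc r v s₀) = 0 := mdot_self_mcross _ _
  set m := mc r v s₀ with hm
  set p := mdot Q (v s₀) with hpdef
  set qm := mdot Q (muc r v s₀) with hqm
  set qr := mdot Q (r s₀) with hqr
  have hs1 : (0:ℝ) < 1 + p ^ 2 := by positivity
  set a := Real.sqrt (1 + p ^ 2) with ha
  have hapos : 0 < a := Real.sqrt_pos.mpr hs1
  have ha2 : a ^ 2 = 1 + p ^ 2 := Real.sq_sqrt hs1.le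
  have hrpow : (1 + p ^ 2) ^ (3 / 2 : ℝ) = a ^ 3 := by
    rw [show (3 / 2 : ℝ) = (1 / 2) * 3 by norm_num, Real.rpow_mul hs1.le,
      ← Real.sqrt_eq_rpow, ← ha]
    rw [show (3:ℝ) = ((3:ℕ):ℝ) by norm_num, Real.rpow_natCast]
  rw [hrpow]
  constructor
  · intro hE
    have h0 := congrArg (fun u => mdot (v s₀) u) hE
    simp only [mdot_sub_right, mdot_add_right, mdot_smul_right, mdot_zero_right] at h0
    rw [hvv, hvm, mdot_comm (v s₀) (r s₀), hrvs] at h0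
    have e1' : m * qm = 0 := by
      have hane : a ≠ 0 := hapos.ne'
      field_simp at h0
      have h0' : m * qm * a ^ 2 = 0 := by linear_combination (-1) * h0
      exact (mul_eq_zero.mp h0').resolve_right (pow_ne_zero _ hane)
    have h1 := congrArg (fun u => mdot (muc r v s₀) u) hE
    simp only [mdot_sub_right, mdot_add_right, mdot_smul_right, mdot_zero_right] at h1
    rw [hmm, mdot_comm (muc r v s₀) (v s₀), hvm, mdot_comm (muc r v s₀) (r s₀), hrm] at h1
    have e2' : m * p = 0 := by
      have hane : a ≠ 0 := hapos.ne'
      have h3 : a ^ 3 ≠ 0 := pow_ne_zero _ hane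
      have key : m * (p * qm) * qm = 0 := by
        have : m * (p * qm) * qm = (m * qm) * (p * qm) := by ring
        rw [this, e1', zero_mul]
      field_simp at h1
      nlinarith [h1, key, hs1, hapos, ha2, sq_nonneg qm, mul_pos hapos (mul_pos hapos hapos)]
    by_cases hm0 : m = 0
    · exact Or.inl hm0
    · right
      have hqm0 : qm = 0 := by
        rcases mul_eq_zero.mp e1' with h' | h'
        · exact absurd h' hm0
        · exact h'
      have hp0 : p = 0 := by
        rcases mul_eq_zero.mp e2' with h' | h'
        · exact absurd h' hm0
        · exact h'
      have hQr : Q = (-(mdot Q (r s₀))) • r s₀ := by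
        have hthis := hQexp s₀ hs₀
        have h5 : mdot Q (v s₀) = 0 := by rw [← hpdef]; exact hp0
        have h6 : mdot Q (muc r v s₀) = 0 := by rw [← hqm]; exact hqm0
        rw [h5, h6] at hthis
        simpa using hthis
      have hQQ : mdot Q Q = -1 := hQ.1
      have hq2 : mdot Q (r s₀) ^ 2 = 1 := by
        have h7 := hQQ
        rw [hQr, mdot_smul_right, mdot_smul_left, hrr1] at h7
        nlinarith [h7]
      have hr0 : 0 < r s₀ 0 := (hrp s₀ hs₀).2
      have hQ0 : 0 < Q 0 := hQ.2
      have hqr1 : mdot Q (r s₀) = -1 := by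
        have hfac : (mdot Q (r s₀) - 1) * (mdot Q (r s₀) + 1) = 0 := by linear_combination hq2
        rcases mul_eq_zero.mp hfac with h' | h'
        · exfalso
          have hq1 : mdot Q (r s₀) = 1 := by linarith
          have hcomp : Q 0 = -(mdot Q (r s₀)) * r s₀ 0 := by
            conv_lhs => rw [hQr]
            simp
          rw [hq1] at hcomp
          nlinarith
        · linarith
      rw [hQr, hqr1]
      simp
  · rintro (hm0 | hq)
    · rw [hm0]
      simp
    · have hp0 : p = 0 := by rw [hpdef, hq, hrvs]
      have hqm0 : qm = 0 := by rw [hqm, hq, muc]; exact mdot_self_mcross _ _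
      rw [hp0, hqm0]
      simp
end

section
/- Let (r,v) : I → H² × dS² be a spacelike Legendre curve with spacelike hyperbolic Legendre curvature (ℓ,m), and let Q ∈ H². If s₀ ∈ I is a singular point of the dual curve v (i.e., v'(s₀) = 0), then s₀ is a singular point of the hyperbolic pedal curve Ped_Q(r) as well, i.e., d/ds Ped_Q(r)(s₀) = 0. -/
/-- if `s₀` is a singular point of the dual curve `v`, then `s₀` is a
singular point of the hyperbolic pedal curve as well. -/
theorem dual_singular_implies_pedal_singular
    (I : Set ℝ) (hI : IsOpen I) (r v : ℝ → Fin 3 → ℝ) (Q : Fin 3 → ℝ)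
    (h : IsSLegendre I r v) (hQ : Q ∈ H2)
    (s₀ : ℝ) (hs₀ : s₀ ∈ I) (hv : deriv v s₀ = 0) :
    deriv (Ped Q v) s₀ = 0 := by
  have hvd : DifferentiableAt ℝ v s₀ :=
    (h.2.1.contDiffAt (hI.mem_nhds hs₀)).differentiableAt (by simp)
  have hv0 : HasDerivAt v 0 s₀ := hv ▸ hvd.hasDerivAt
  have hvi : ∀ i : Fin 3, HasDerivAt (fun s => v s i) 0 s₀ := fun i => by
    have := (ContinuousLinearMap.proj (R := ℝ) (φ := fun _ : Fin 3 => ℝ)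
      i).hasFDerivAt.comp_hasDerivAt s₀ hv0
    simpa [Function.comp_def, Pi.add_def, Pi.neg_def, Pi.sub_def, Pi.pow_def, Pi.inv_def, Pi.smul_def'] using this
  have hg : HasDerivAt (fun s => mdot Q (v s)) 0 s₀ := by
    have := (((hvi 0).const_mul (Q 0)).neg.add ((hvi 1).const_mul (Q 1))).add
      ((hvi 2).const_mul (Q 2))
    simpa [mdot, mul_comm, Function.comp_def, Pi.add_def, Pi.neg_def, Pi.sub_def, Pi.pow_def, Pi.inv_def, Pi.smul_def'] using this
  have hpos : 0 < 1 + (mdot Q (v s₀)) ^ 2 := by positivity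
  have hsq : HasDerivAt (fun s => 1 + (mdot Q (v s)) ^ 2) 0 s₀ := by
    simpa [Function.comp_def, Pi.add_def, Pi.neg_def, Pi.sub_def, Pi.pow_def, Pi.inv_def, Pi.smul_def'] using (hasDerivAt_const s₀ (1 : ℝ)).add (hg.pow 2)
  have hsqrt : HasDerivAt (fun s => Real.sqrt (1 + (mdot Q (v s)) ^ 2)) 0 s₀ := by
    have := (Real.hasDerivAt_sqrt hpos.ne').comp s₀ hsq
    simpa [Function.comp_def, Pi.add_def, Pi.neg_def, Pi.sub_def, Pi.pow_def, Pi.inv_def, Pi.smul_def'] using this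
  have hsne : Real.sqrt (1 + (mdot Q (v s₀)) ^ 2) ≠ 0 := by positivity
  have hinv : HasDerivAt (fun s => (Real.sqrt (1 + (mdot Q (v s)) ^ 2))⁻¹) 0 s₀ := by
    simpa [Function.comp_def, Pi.add_def, Pi.neg_def, Pi.sub_def, Pi.pow_def, Pi.inv_def, Pi.smul_def'] using hsqrt.inv hsne
  have hw : HasDerivAt (fun s => Q - mdot Q (v s) • v s) 0 s₀ := by
    simpa [Function.comp_def, Pi.add_def, Pi.neg_def, Pi.sub_def, Pi.pow_def, Pi.inv_def, Pi.smul_def'] using (hasDerivAt_const s₀ Q).sub (hg.smul hv0)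
  have hP : HasDerivAt (Ped Q v) 0 s₀ := by
    unfold Ped; simpa [Ped, Function.comp_def, Pi.add_def, Pi.neg_def, Pi.sub_def, Pi.pow_def, Pi.inv_def, Pi.smul_def'] using hinv.smul hw
  exact hP.deriv
end

section
/- Let Q = (1,0,0) ∈ H²₊ and define ψ_Q : dS² → H²₊ by ψ_Q(x) = (Q − ⟨Q,x⟩x)/√(1 + ⟨Q,x⟩²), and q : ℝ³ → ℝ² by q(x₁,x₂,x₃) = (x₂,x₃). For x = (x₁,x₂,x₃) ∈ dS², writing λ = arcsinh(x₁), one has ψ_Q(x) = (cosh λ, x₂ tanh λ, x₃ tanh λ). Consequently: (a) if x₂ ≠ 0 then, setting (u₁,u₂) = (x₂ tanh λ, x₃/x₂), q(ψ_Q(x)) = (u₁, u₁u₂); and (b) if x₃ ≠ 0 then, setting (u₁',u₂') = (x₂/x₃, x₃ tanh λ), q(ψ_Q(x)) = (u₁'u₂', u₂'). Thus in these charts ψ_Q is given by the same formulas as the blow-up of ℝ² centered at the origin; in particular the pedal construction x ↦ ψ_Q(x) is a map of blow-up type. -/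
/-- for `Q = (1,0,0)` the pedal construction `ψ_Q : dS² → H²₊` is, writing
`λ = arcsinh x₁`, given by `ψ_Q(x) = (cosh λ, x₂ tanh λ, x₃ tanh λ)`, and in the two
standard charts the map `q ∘ ψ_Q` is given by the blow-up formulas `(u₁, u₁u₂)` and
`(u₁'u₂', u₂')`; i.e. `ψ_Q` is a map of blow-up type. -/
theorem psi_pedal_map_is_of_blowup_type
    (Q : Fin 3 → ℝ) (hQ : Q = ![1, 0, 0])
    (ψ : (Fin 3 → ℝ) → Fin 3 → ℝ)
    (hψ : ∀ x, ψ x = (Real.sqrt (1 + (mdot Q x) ^ 2))⁻¹ • (Q - mdot Q x • x))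
    (x : Fin 3 → ℝ) (hx : x ∈ dS2) :
    ψ x = ![Real.cosh (Real.arsinh (x 0)), x 1 * Real.tanh (Real.arsinh (x 0)),
      x 2 * Real.tanh (Real.arsinh (x 0))] ∧
    (x 1 ≠ 0 →
      qchart (ψ x) = (x 1 * Real.tanh (Real.arsinh (x 0)),
        (x 1 * Real.tanh (Real.arsinh (x 0))) * (x 2 / x 1))) ∧
    (x 2 ≠ 0 →
      qchart (ψ x) = ((x 1 / x 2) * (x 2 * Real.tanh (Real.arsinh (x 0))),
        x 2 * Real.tanh (Real.arsinh (x 0)))) := by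
  subst hQ
  have hc : Real.cosh (Real.arsinh (x 0)) = Real.sqrt (1 + x 0 ^ 2) := Real.cosh_arsinh _
  have hcpos : (0:ℝ) < Real.sqrt (1 + x 0 ^ 2) := by
    rw [← hc]; exact Real.cosh_pos _
  have hs : Real.sqrt (1 + x 0 ^ 2) ≠ 0 := ne_of_gt hcpos
  have hsq : Real.sqrt (1 + x 0 ^ 2) * Real.sqrt (1 + x 0 ^ 2) = 1 + x 0 ^ 2 :=
    Real.mul_self_sqrt (by positivity)
  have ht : Real.tanh (Real.arsinh (x 0)) = x 0 / Real.sqrt (1 + x 0 ^ 2) := by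
    rw [Real.tanh_eq_sinh_div_cosh, Real.sinh_arsinh, hc]
  have hmd : mdot ![1, 0, 0] x = -(x 0) := by simp [mdot]
  refine ⟨?_, ?_, ?_⟩
  · rw [hψ, hmd]
    funext i
    fin_cases i <;>
      simp [hc, ht, Pi.smul_apply, Pi.sub_apply, smul_eq_mul, Matrix.vecHead, Matrix.vecTail] <;>
      field_simp <;> nlinarith [hsq]
  · intro h1
    rw [hψ, hmd]
    simp [qchart, ht, Pi.smul_apply, Pi.sub_apply, smul_eq_mul, Matrix.vecHead, Matrix.vecTail]
    field_simp
    constructor <;> first | trivial | ring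
  · intro h2
    rw [hψ, hmd]
    simp [qchart, ht, Pi.smul_apply, Pi.sub_apply, smul_eq_mul, Matrix.vecHead, Matrix.vecTail]
    field_simp
    constructor <;> first | trivial | ring
end

section
/- Let (r,v) : I → H² × dS² be a spacelike Legendre curve with r(I) ⊂ H²₊ and let Q ∈ H²₊. Set H̃_Q = {y ∈ H²₊ : ⟨Q,y⟩ < 0} and φ_Q(x) = −2⟨Q,x⟩x − Q. Then: (a) Ped_Q(r)(s) ∈ H̃_Q for all s ∈ I; (b) the restriction φ_Q|_{H̃_Q} : H̃_Q → φ_Q(H̃_Q) is a C^∞ diffeomorphism (a bijective smooth map between these subsets of H² whose inverse is smooth, every point of H̃_Q being a regular point of φ_Q); and (c) Ort_Q(r) = φ_Q ∘ Ped_Q(r) on I. Consequently, for every s₀ ∈ I the orthotomic curve germ Ort_Q(r) : (I,s₀) → H²₊ is C^∞ L-equivalent to the pedal curve germ Ped_Q(r) : (I,s₀) → H²₊. -/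
namespace OrthoPedalAux
noncomputable section

/-- inverse of the map `φ_Q`. -/
def psinv (Q z : Fin 3 → ℝ) : Fin 3 → ℝ :=
  (2 * Real.sqrt ((1 - mdot Q z) / 2))⁻¹ • (z + Q)

lemma mdotE1 (b : ℝ) (Q x : Fin 3 → ℝ) :
    mdot (b • x - Q) (b • x - Q) = b^2 * mdot x x - 2*b*(mdot Q x) + mdot Q Q := by
  simp only [mdot, Pi.smul_apply, Pi.sub_apply, smul_eq_mul]; ring

lemma mdotE2 (b : ℝ) (Q x : Fin 3 → ℝ) :
    mdot Q (b • x - Q) = b * mdot Q x - mdot Q Q := by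
  simp only [mdot, Pi.smul_apply, Pi.sub_apply, smul_eq_mul]; ring

lemma mdotE3 (e : ℝ) (Q z : Fin 3 → ℝ) :
    mdot (e • (z + Q)) (e • (z + Q)) = e^2 * (mdot z z + 2 * mdot Q z + mdot Q Q) := by
  simp only [mdot, Pi.smul_apply, Pi.add_apply, smul_eq_mul]; ring

lemma mdotE4 (e : ℝ) (Q z : Fin 3 → ℝ) :
    mdot Q (e • (z + Q)) = e * (mdot Q z + mdot Q Q) := by
  simp only [mdot, Pi.smul_apply, Pi.add_apply, smul_eq_mul]; ring

lemma mdotE5 (a c : ℝ) (Q w : Fin 3 → ℝ) :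
    mdot (a • (Q - c • w)) (a • (Q - c • w)) =
      a^2 * (mdot Q Q - 2*c*(mdot Q w) + c^2 * mdot w w) := by
  simp only [mdot, Pi.smul_apply, Pi.sub_apply, smul_eq_mul]; ring

lemma mdotE6 (a c : ℝ) (Q w : Fin 3 → ℝ) :
    mdot Q (a • (Q - c • w)) = a * (mdot Q Q - c * mdot Q w) := by
  simp only [mdot, Pi.smul_apply, Pi.sub_apply, smul_eq_mul]; ring

lemma mpos {Q y : Fin 3 → ℝ} (hQ : mdot Q Q = -1) (hQ0 : 0 < Q 0)
    (hy : mdot y y = -1) (hlt : mdot Q y < 0) : 0 < y 0 := by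
  unfold mdot at hQ hy hlt
  by_contra hle
  push_neg at hle
  nlinarith [sq_nonneg (Q 1 * y 2 - Q 2 * y 1), sq_nonneg (Q 1 * y 1 + Q 2 * y 2),
    mul_nonneg hQ0.le (neg_nonneg.mpr hle)]

lemma mrcs {Q y : Fin 3 → ℝ} (hQ : mdot Q Q = -1) (hQ0 : 0 < Q 0)
    (hy : mdot y y = -1) (hy0 : 0 < y 0) : mdot Q y ≤ -1 := by
  unfold mdot at hQ hy ⊢
  nlinarith [sq_nonneg (Q 1 * y 2 - Q 2 * y 1), sq_nonneg (Q 1 - y 1), sq_nonneg (Q 2 - y 2),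
    mul_pos hQ0 hy0, sq_nonneg (Q 0 - y 0)]

lemma ped_mem (Q w : Fin 3 → ℝ) (hQQ : mdot Q Q = -1) (hw : mdot w w = 1) :
    mdot ((Real.sqrt (1 + (mdot Q w)^2))⁻¹ • (Q - mdot Q w • w))
        ((Real.sqrt (1 + (mdot Q w)^2))⁻¹ • (Q - mdot Q w • w)) = -1 ∧
    mdot Q ((Real.sqrt (1 + (mdot Q w)^2))⁻¹ • (Q - mdot Q w • w))
      = -Real.sqrt (1 + (mdot Q w)^2) := by
  set c := mdot Q w with hc
  have hcpos : 0 < 1 + c^2 := by positivity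
  set a := Real.sqrt (1 + c^2) with ha
  have ha2 : a^2 = 1 + c^2 := Real.sq_sqrt hcpos.le
  have ha0 : 0 < a := Real.sqrt_pos.mpr hcpos
  constructor
  · rw [mdotE5, hQQ, hw, ← hc]
    field_simp
    nlinarith [ha2]
  · rw [mdotE6, hQQ, ← hc]
    field_simp
    nlinarith [ha2]

lemma ort_eq (Q w : Fin 3 → ℝ) (hQQ : mdot Q Q = -1) (hw : mdot w w = 1) :
    Q - (2 * mdot Q w) • w =
      (-(2 * mdot Q ((Real.sqrt (1 + (mdot Q w)^2))⁻¹ • (Q - mdot Q w • w)))) •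
        ((Real.sqrt (1 + (mdot Q w)^2))⁻¹ • (Q - mdot Q w • w)) - Q := by
  rw [(ped_mem Q w hQQ hw).2]
  set c := mdot Q w with hc
  have hcpos : 0 < 1 + c^2 := by positivity
  set a := Real.sqrt (1 + c^2) with ha
  have ha0 : 0 < a := Real.sqrt_pos.mpr hcpos
  funext i
  simp only [Pi.smul_apply, Pi.sub_apply, smul_eq_mul]
  field_simp
  ring

lemma phi_mem {Q x : Fin 3 → ℝ} (hQQ : mdot Q Q = -1) (hQ0 : 0 < Q 0)
    (hx : mdot x x = -1) (hx0 : 0 < x 0) (hlt : mdot Q x < 0) :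
    mdot ((-(2 * mdot Q x)) • x - Q) ((-(2 * mdot Q x)) • x - Q) = -1 ∧
    mdot Q ((-(2 * mdot Q x)) • x - Q) < 0 := by
  have ht : mdot Q x ≤ -1 := mrcs hQQ hQ0 hx hx0
  constructor
  · rw [mdotE1, hQQ, hx]; ring
  · rw [mdotE2, hQQ]; nlinarith

lemma psinv_mem {Q z : Fin 3 → ℝ} (hQQ : mdot Q Q = -1)
    (hz : mdot z z = -1) (hlt : mdot Q z < 0) :
    mdot (psinv Q z) (psinv Q z) = -1 ∧
    mdot Q (psinv Q z) = -Real.sqrt ((1 - mdot Q z) / 2) := by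
  have hu : 0 < (1 - mdot Q z) / 2 := by linarith
  set s := Real.sqrt ((1 - mdot Q z) / 2) with hs
  have hs2 : s^2 = (1 - mdot Q z) / 2 := Real.sq_sqrt hu.le
  have hs0 : 0 < s := Real.sqrt_pos.mpr hu
  unfold psinv
  rw [← hs]
  constructor
  · rw [mdotE3, hz, hQQ]
    field_simp
    nlinarith [hs2]
  · rw [mdotE4, hQQ]
    field_simp
    nlinarith [hs2]

lemma psinv_phi {Q x : Fin 3 → ℝ} (hQQ : mdot Q Q = -1)
    (hx : mdot x x = -1) (hlt : mdot Q x < 0) :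
    psinv Q ((-(2 * mdot Q x)) • x - Q) = x := by
  have hz : mdot Q ((-(2 * mdot Q x)) • x - Q) = 1 - 2 * (mdot Q x)^2 := by
    rw [mdotE2, hQQ]; ring
  have h2 : (1 - (1 - 2 * (mdot Q x)^2)) / 2 = (mdot Q x)^2 := by ring
  funext i
  simp only [psinv, hz, h2, Real.sqrt_sq_eq_abs, abs_of_neg hlt,
    Pi.smul_apply, Pi.add_apply, Pi.sub_apply, smul_eq_mul]
  have hne : mdot Q x ≠ 0 := hlt.ne
  field_simp
  ring

lemma phi_psinv {Q z : Fin 3 → ℝ} (hQQ : mdot Q Q = -1)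
    (hz : mdot z z = -1) (hlt : mdot Q z < 0) :
    (-(2 * mdot Q (psinv Q z))) • psinv Q z - Q = z := by
  have hu : 0 < (1 - mdot Q z) / 2 := by linarith
  have hs0 : 0 < Real.sqrt ((1 - mdot Q z) / 2) := Real.sqrt_pos.mpr hu
  rw [(psinv_mem hQQ hz hlt).2]
  set s := Real.sqrt ((1 - mdot Q z) / 2) with hs
  funext i
  simp only [psinv, ← hs, Pi.smul_apply, Pi.add_apply, Pi.sub_apply, smul_eq_mul]
  field_simp
  ring

lemma mproj_contDiff {n : WithTop ℕ∞} : ∀ i : Fin 3, ContDiff ℝ n (fun x : Fin 3 → ℝ => x i) :=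
  fun i => contDiff_apply ℝ ℝ i

lemma mdotQ_contDiff {n : WithTop ℕ∞} (Q : Fin 3 → ℝ) : ContDiff ℝ n (fun x => mdot Q x) := by
  unfold mdot
  exact ((contDiff_const.mul (mproj_contDiff 0)).neg.add
    (contDiff_const.mul (mproj_contDiff 1))).add (contDiff_const.mul (mproj_contDiff 2))

lemma psinv_contDiffAt {n : WithTop ℕ∞} {Q z : Fin 3 → ℝ} (hlt : mdot Q z < 1) :
    ContDiffAt ℝ n (psinv Q) z := by
  have hp : ∀ i : Fin 3, ContDiff ℝ n (fun x : Fin 3 → ℝ => x i) := mproj_contDiff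
  have hmdQ : ContDiff ℝ n (fun x => mdot Q x) := mdotQ_contDiff Q
  have hsq : ContDiffAt ℝ n (fun w => Real.sqrt ((1 - mdot Q w) / 2)) z := by
    refine ContDiffAt.sqrt ?_ (ne_of_gt (by linarith))
    exact ((contDiff_const.sub hmdQ).div_const 2).contDiffAt
  have hspos : 0 < Real.sqrt ((1 - mdot Q z) / 2) := Real.sqrt_pos.mpr (by linarith)
  have hinv : ContDiffAt ℝ n (fun w => (2 * Real.sqrt ((1 - mdot Q w) / 2))⁻¹) z :=
    (contDiffAt_const.mul hsq).inv (by simpa using (mul_pos two_pos hspos).ne')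
  have : psinv Q = fun w i => (2 * Real.sqrt ((1 - mdot Q w) / 2))⁻¹ * (w i + Q i) := by
    funext w i; simp [psinv]
  rw [this]
  exact contDiffAt_pi.mpr fun i => hinv.mul (((hp i).add contDiff_const).contDiffAt)
def hchart (p : ℝ × ℝ) : Fin 3 → ℝ :=
  ![Real.sqrt (1 + p.1^2 + p.2^2), p.1, p.2]

lemma hchart_pos (p : ℝ × ℝ) : 0 < hchart p 0 := by
  simp only [hchart, Matrix.cons_val_zero]
  exact Real.sqrt_pos.mpr (by positivity)

lemma hchart_mdot (p : ℝ × ℝ) : mdot (hchart p) (hchart p) = -1 := by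
  have h : Real.sqrt (1 + p.1^2 + p.2^2) * Real.sqrt (1 + p.1^2 + p.2^2)
      = 1 + p.1^2 + p.2^2 := Real.mul_self_sqrt (by positivity)
  simp only [mdot, hchart]
  simp only [Matrix.cons_val_zero, Matrix.cons_val_one, Matrix.head_cons, Matrix.cons_val_two,
    Matrix.tail_cons]
  rw [h]; ring

lemma qchart_hchart (p : ℝ × ℝ) : qchart (hchart p) = p := by
  simp [qchart, hchart]

lemma hchart_qchart {x : Fin 3 → ℝ} (hx : mdot x x = -1) (hx0 : 0 < x 0) :
    hchart (qchart x) = x := by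
  have h : 1 + (x 1)^2 + (x 2)^2 = (x 0)^2 := by unfold mdot at hx; nlinarith
  funext i
  fin_cases i <;> simp [hchart, qchart]
  rw [h, Real.sqrt_sq hx0.le]

lemma hchart_contDiff {n : WithTop ℕ∞} : ContDiff ℝ n hchart := by
  have h0 : ContDiff ℝ n (fun p : ℝ × ℝ => Real.sqrt (1 + p.1^2 + p.2^2)) := by
    rw [contDiff_iff_contDiffAt]
    intro p
    exact ContDiffAt.sqrt (by fun_prop) (by positivity)
  refine contDiff_pi.mpr fun i => ?_
  fin_cases i <;> simp only [hchart, Fin.zero_eta, Fin.mk_one, Matrix.cons_val_zero,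
      Matrix.cons_val_one, Matrix.head_cons, Matrix.cons_val_two, Matrix.tail_cons, Fin.isValue]
  · exact h0
  · exact contDiff_fst
  · exact contDiff_snd

end
end OrthoPedalAux

open OrthoPedalAux

/-- (a) the pedal curve lies in `H̃_Q`; (b) `φ_Q` restricted to `H̃_Q` is a
`C^∞` diffeomorphism onto its image; (c) `Ort_Q(r) = φ_Q ∘ Ped_Q(r)`; consequently, at
every `s₀ ∈ I` the orthotomic curve germ is `C^∞` `ℒ`-equivalent to the pedal curve germ
(in the standard chart `q` of `H²₊`). -/
theorem orthotomic_L_equivalent_to_pedal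
    (I : Set ℝ) (hI : IsOpen I) (r v : ℝ → Fin 3 → ℝ) (Q : Fin 3 → ℝ)
    (h : IsSLegendre I r v) (hrp : ∀ s ∈ I, r s ∈ H2plus) (hQ : Q ∈ H2plus)
    (HtilQ : Set (Fin 3 → ℝ)) (hHtil : HtilQ = {y | y ∈ H2plus ∧ mdot Q y < 0})
    (φQ : (Fin 3 → ℝ) → Fin 3 → ℝ) (hφ : ∀ x, φQ x = (-(2 * mdot Q x)) • x - Q) :
    (∀ s ∈ I, Ped Q v s ∈ HtilQ) ∧
    (Set.InjOn φQ HtilQ ∧ ContDiffOn ℝ (⊤ : ℕ∞) φQ HtilQ ∧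
      ∃ ψinv : (Fin 3 → ℝ) → Fin 3 → ℝ,
        ContDiffOn ℝ (⊤ : ℕ∞) ψinv (φQ '' HtilQ) ∧ ∀ y ∈ HtilQ, ψinv (φQ y) = y) ∧
    (∀ s ∈ I, Ort Q v s = φQ (Ped Q v s)) ∧
    (∀ s₀ ∈ I, CnLEquiv ⊤ (fun s => qchart (Ped Q v s)) s₀
      (fun s => qchart (Ort Q v s))) := by
  obtain ⟨hrsm, hvsm, hrH, hvdS, hrv, hr'v⟩ := h
  obtain ⟨hQQ, hQ0⟩ := hQ
  subst hHtil
  have hPdef : ∀ s, Ped Q v s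
      = (Real.sqrt (1 + (mdot Q (v s))^2))⁻¹ • (Q - mdot Q (v s) • v s) := fun _ => rfl
  -- part (a)
  have hpeda : ∀ s ∈ I, Ped Q v s ∈ {y | y ∈ H2plus ∧ mdot Q y < 0} := by
    intro s hs
    have h1 := ped_mem Q (v s) hQQ (hvdS s hs)
    have hpos : 0 < Real.sqrt (1 + (mdot Q (v s))^2) := Real.sqrt_pos.mpr (by positivity)
    have hlt : mdot Q (Ped Q v s) < 0 := by rw [hPdef s, h1.2]; linarith
    have hm : mdot (Ped Q v s) (Ped Q v s) = -1 := by rw [hPdef s]; exact h1.1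
    exact ⟨⟨hm, mpos hQQ hQ0 hm hlt⟩, hlt⟩
  -- part (c)
  have hOrt : ∀ s ∈ I, Ort Q v s = φQ (Ped Q v s) := by
    intro s hs
    rw [hφ]
    show Q - (2 * mdot Q (v s)) • v s = _
    rw [hPdef s]
    exact ort_eq Q (v s) hQQ (hvdS s hs)
  -- smoothness of φQ
  have hφsm : ∀ n : WithTop ℕ∞, ContDiff ℝ n φQ := by
    intro n
    have hφc : φQ = fun x i => -(2 * mdot Q x) * x i - Q i := by
      funext x i; rw [hφ]; simp
    rw [hφc]
    exact contDiff_pi.mpr fun i =>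
      ((contDiff_const.mul (mdotQ_contDiff Q)).neg.mul (mproj_contDiff i)).sub contDiff_const
  -- left inverse
  have hlinv : ∀ y ∈ {y | y ∈ H2plus ∧ mdot Q y < 0}, psinv Q (φQ y) = y := by
    intro y hy
    rw [hφ]
    exact psinv_phi hQQ hy.1.1 hy.2
  -- membership transfer lemmas
  have hφmem : ∀ x, x ∈ H2plus → mdot Q x < 0 → (φQ x ∈ H2plus ∧ mdot Q (φQ x) < 0) := by
    intro x hx hlt
    have h1 := phi_mem hQQ hQ0 hx.1 hx.2 hlt
    rw [← hφ x] at h1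
    exact ⟨⟨h1.1, mpos hQQ hQ0 h1.1 h1.2⟩, h1.2⟩
  have hψmem : ∀ z, z ∈ H2plus → mdot Q z < 0 →
      (psinv Q z ∈ H2plus ∧ mdot Q (psinv Q z) < 0) := by
    intro z hz hlt
    obtain ⟨h1, h2⟩ := psinv_mem hQQ hz.1 hlt
    have hneg : mdot Q (psinv Q z) < 0 := by
      rw [h2]
      have := Real.sqrt_pos.mpr (show 0 < (1 - mdot Q z) / 2 by linarith)
      linarith
    exact ⟨⟨h1, mpos hQQ hQ0 h1 hneg⟩, hneg⟩
  refine ⟨hpeda, ⟨?_, (hφsm ((⊤ : ℕ∞) : WithTop ℕ∞)).contDiffOn, psinv Q, ?_, hlinv⟩, hOrt, ?_⟩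
  · -- injectivity
    intro y hy z hz heq
    rw [← hlinv y hy, ← hlinv z hz, heq]
  · -- smoothness of the inverse on the image
    rintro z ⟨y, hy, rfl⟩
    have hlt1 : mdot Q (φQ y) < 1 := by
      rw [hφ, mdotE2, hQQ]
      nlinarith [mul_pos (neg_pos.mpr hy.2) (neg_pos.mpr hy.2)]
    exact (psinv_contDiffAt hlt1).contDiffWithinAt
  -- part (d)
  intro s₀ hs₀
  have hqsm : ContDiff ℝ ((⊤:ℕ∞):WithTop ℕ∞) qchart := (mproj_contDiff 1).prodMk (mproj_contDiff 2)
  set U : Set (ℝ × ℝ) := {p | mdot Q (hchart p) < 0} with hUdef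
  have hUopen : IsOpen U :=
    isOpen_lt ((mdotQ_contDiff (n := (⊤:ℕ∞)) Q).continuous.comp (hchart_contDiff (n := (⊤:ℕ∞))).continuous) continuous_const
  have hLmem : ∀ p ∈ U, hchart p ∈ H2plus ∧ mdot Q (hchart p) < 0 :=
    fun p hp' => ⟨⟨hchart_mdot p, hchart_pos p⟩, hp'⟩
  have hqU : ∀ x, x ∈ H2plus → mdot Q x < 0 → qchart x ∈ U := by
    intro x hx hlt
    show mdot Q (hchart (qchart x)) < 0
    rw [hchart_qchart hx.1 hx.2]
    exact hlt
  have hPs₀ := hpeda s₀ hs₀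
  have e₀ : hchart (qchart (Ped Q v s₀)) = Ped Q v s₀ := hchart_qchart hPs₀.1.1 hPs₀.1.2
  refine ⟨fun p => qchart (φQ (hchart p)),
    ⟨U, U, fun p => qchart (psinv Q (hchart p)), hUopen, ?_, hUopen, ?_, ?_, ?_, ?_, ?_, ?_, ?_⟩,
    ?_, ?_⟩
  · exact hqU _ hPs₀.1 hPs₀.2
  · show qchart (φQ (hchart (qchart (Ped Q v s₀)))) ∈ U
    rw [e₀]
    exact hqU _ (hφmem _ hPs₀.1 hPs₀.2).1 (hφmem _ hPs₀.1 hPs₀.2).2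
  · exact (hqsm.comp ((hφsm _).comp hchart_contDiff)).contDiffOn
  · intro p hp'
    have h1 : ContDiffAt ℝ ((⊤:ℕ∞):WithTop ℕ∞) (psinv Q) (hchart p) :=
      psinv_contDiffAt (lt_trans hp' zero_lt_one)
    exact ((hqsm.contDiffAt.comp _ (h1.comp p hchart_contDiff.contDiffAt))).contDiffWithinAt
  · intro p hp'
    obtain ⟨hx, hlt⟩ := hLmem p hp'
    exact hqU _ (hφmem _ hx hlt).1 (hφmem _ hx hlt).2
  · intro p hp'
    obtain ⟨hx, hlt⟩ := hLmem p hp'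
    exact hqU _ (hψmem _ hx hlt).1 (hψmem _ hx hlt).2
  · intro p hp'
    obtain ⟨hx, hlt⟩ := hLmem p hp'
    have hz := hφmem _ hx hlt
    show qchart (psinv Q (hchart (qchart (φQ (hchart p))))) = p
    rw [hchart_qchart hz.1.1 hz.1.2, hφ, psinv_phi hQQ hx.1 hlt, qchart_hchart]
  · intro p hp'
    obtain ⟨hx, hlt⟩ := hLmem p hp'
    have hw := hψmem _ hx hlt
    show qchart (φQ (hchart (qchart (psinv Q (hchart p))))) = p
    rw [hchart_qchart hw.1.1 hw.1.2, hφ, phi_psinv hQQ hx.1 hlt, qchart_hchart]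
  · show qchart (φQ (hchart (qchart (Ped Q v s₀)))) = qchart (Ort Q v s₀)
    rw [e₀, ← hOrt s₀ hs₀]
  · filter_upwards [hI.mem_nhds hs₀] with s hs
    have hPs := hpeda s hs
    show qchart (Ort Q v s) = qchart (φQ (hchart (qchart (Ped Q v s))))
    rw [hchart_qchart hPs.1.1 hPs.1.2, ← hOrt s hs]
end
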